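/- arXiv:2011.02741 — 3 statements merged into one kernel-verified Lean document; each statement's English description precedes it below -/
import Mathlib

section
/- Let (X, G, Φ) be a dynamical system where X is a compact totally disconnected Hausdorff space, and let S be a finite subset of G. If Φ has the S-shadowing property, then (X, G, Φ) is conjugate to the inverse limit of an inverse system of dynamical systems, satisfying the Mittag-Leffler condition, each of whose terms is a shift of finite type over S ∪ {e_G} (a subshift of a full shift over some finite alphabet, with the shift G-action). -/
open Set
open scoped Classical

universe u

/-! ### Dynamical systems: actions of a countable discrete group by homeomorphisms -/

/-- An action of a group `G` on a topological space `X`: each `act g` is a homeomorphism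
(continuity of the inverse follows from `act g⁻¹`). -/
structure DynAction (G X : Type u) [Group G] [TopologicalSpace X] where
  act : G → X → X
  continuous_act : ∀ g : G, Continuous (act g)
  act_one : ∀ x : X, act 1 x = x
  act_mul : ∀ (g g' : G) (x : X), act (g * g') x = act g (act g' x)

section Covers

variable {G X : Type u} [Group G] [TopologicalSpace X]

/-- A finite open cover of `X`. -/
def IsFOC (𝒰 : Finset (Set X)) : Prop :=
  (∀ U ∈ 𝒰, IsOpen U) ∧ ⋃₀ (𝒰 : Set (Set X)) = Set.univ

/-- A finite partition of `X` into nonempty clopen sets. -/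
def IsClopenPartition (𝒰 : Finset (Set X)) : Prop :=
  (∀ U ∈ 𝒰, IsClopen U ∧ U.Nonempty) ∧ ⋃₀ (𝒰 : Set (Set X)) = Set.univ ∧
    ∀ U ∈ 𝒰, ∀ V ∈ 𝒰, U ≠ V → U ∩ V = ∅

/-- `𝒱` refines `𝒰`: every member of `𝒱` is contained in a member of `𝒰`. -/
def Refines (𝒱 𝒰 : Finset (Set X)) : Prop :=
  ∀ V ∈ 𝒱, ∃ U ∈ 𝒰, V ⊆ U

/-- `{U g}` is a pattern of the `(S,𝒰)`-pseudo-orbit `{x g}`: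
all `U g` belong to `𝒰`, and `x (s*g) ∈ U (s*g)` and `Φ_s (x g) ∈ U (s*g)`
for all `g ∈ G`, `s ∈ S`. -/
def IsPseudoOrbitPattern (Φ : DynAction G X) (S : Set G) (𝒰 : Finset (Set X))
    (x : G → X) (U : G → Set X) : Prop :=
  (∀ g : G, U g ∈ 𝒰) ∧
    ∀ g : G, ∀ s ∈ S, x (s * g) ∈ U (s * g) ∧ Φ.act s (x g) ∈ U (s * g)

/-- `{x g}` is an `(S,𝒰)`-pseudo-orbit. -/
def IsPseudoOrbit (Φ : DynAction G X) (S : Set G) (𝒰 : Finset (Set X)) (x : G → X) : Prop :=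
  ∃ U : G → Set X, IsPseudoOrbitPattern Φ S 𝒰 x U

/-- `z` `𝒰`-shadows the family `{x g}`. -/
def Shadows (Φ : DynAction G X) (𝒰 : Finset (Set X)) (z : X) (x : G → X) : Prop :=
  ∀ g : G, ∃ U ∈ 𝒰, Φ.act g z ∈ U ∧ x g ∈ U

/-- The (topological) `S`-shadowing property. -/
def ShadowingProperty (Φ : DynAction G X) (S : Set G) : Prop :=
  ∀ 𝒰 : Finset (Set X), IsFOC 𝒰 → ∃ 𝒱 : Finset (Set X), IsFOC 𝒱 ∧
    ∀ x : G → X, IsPseudoOrbit Φ S 𝒱 x → ∃ z : X, Shadows Φ 𝒰 z x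

/-! ### Equivariant maps, factor maps, conjugacies -/

def IsEquivariant {Y : Type u} [TopologicalSpace Y]
    (ΦX : DynAction G X) (ΦY : DynAction G Y) (f : X → Y) : Prop :=
  ∀ (g : G) (x : X), f (ΦX.act g x) = ΦY.act g (f x)

/-- `f` is a factor map from `(X,G,ΦX)` onto `(Y,G,ΦY)`. -/
def IsFactorMap {Y : Type u} [TopologicalSpace Y]
    (ΦX : DynAction G X) (ΦY : DynAction G Y) (f : X → Y) : Prop :=
  Continuous f ∧ Function.Surjective f ∧ IsEquivariant ΦX ΦY f

/-- `f` is a conjugacy (bijective factor map). -/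
def IsConjugacy {Y : Type u} [TopologicalSpace Y]
    (ΦX : DynAction G X) (ΦY : DynAction G Y) (f : X → Y) : Prop :=
  Continuous f ∧ Function.Bijective f ∧ IsEquivariant ΦX ΦY f

end Covers

/-! ### Shifts, subshifts, shifts of finite type -/

/-- The shift action on `A^G`: `(σ_g x) h = x (h * g)`. -/
def shift (G A : Type u) [Group G] (g : G) (x : G → A) : G → A :=
  fun h => x (h * g)

/-- The full shift `A^G` (product topology) as a dynamical system. -/
def shiftDyn (G A : Type u) [Group G] [TopologicalSpace A] : DynAction G (G → A) where
  act := shift G A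
  continuous_act g := continuous_pi fun h => continuous_apply (h * g)
  act_one x := by funext h; simp [shift]
  act_mul g g' x := by funext h; simp [shift, mul_assoc]

/-- A subshift: a closed shift-invariant subset of the full shift `A^G`. -/
def IsSubshift {G A : Type u} [Group G] [TopologicalSpace A] (Y : Set (G → A)) : Prop :=
  IsClosed Y ∧ ∀ g : G, ∀ x ∈ Y, shift G A g x ∈ Y

/-- The cylinder set determined by the values of `P` on the finite shape `B`. -/
def cylinder {G A : Type u} (B : Finset G) (P : G → A) : Set (G → A) :=
  {y | ∀ b ∈ B, y b = P b}

/-- The language of `Y ⊆ A^G` over the finite shape `B` (a pattern is recorded by any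
function `G → A` with the prescribed values on `B`). -/
def language {G A : Type u} (B : Finset G) (Y : Set (G → A)) : Set (G → A) :=
  {P | (cylinder B P ∩ Y).Nonempty}

/-- `Y` is a shift of finite type over the finite shape `B`: it is cut out by a family of
forbidden patterns on `B`. -/
def IsSFTOver {G A : Type u} [Group G] (B : Finset G) (Y : Set (G → A)) : Prop :=
  ∃ ℱ : Set (G → A), Y = {x | ∀ g : G, ∀ P ∈ ℱ, shift G A g x ∉ cylinder B P}

/-- The shift action restricted to a subshift. -/
def subshiftDyn {G A : Type u} [Group G] [TopologicalSpace A] (Y : Set (G → A))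
    (hY : IsSubshift Y) : DynAction G ↥Y where
  act g x := ⟨shift G A g x.1, hY.2 g x.1 x.2⟩
  continuous_act g := Continuous.subtype_mk
    ((continuous_pi fun h => continuous_apply (h * g)).comp continuous_subtype_val) _
  act_one x := by apply Subtype.ext; funext h; simp [shift]
  act_mul g g' x := by apply Subtype.ext; funext h; simp [shift, mul_assoc]

/-! ### Hitting time sets and mixing-type properties -/

section Mixing

variable {G X : Type u} [Group G] [TopologicalSpace X]

/-- The hitting time set `N(U,V) = {g ≠ e : U ∩ Φ_{g⁻¹}(V) ≠ ∅}`. -/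
def hittingTimes (Φ : DynAction G X) (U V : Set X) : Set G :=
  {g : G | g ≠ 1 ∧ (U ∩ Φ.act g⁻¹ '' V).Nonempty}

/-- Topological mixing: `G \ N(U,V)` is finite for all nonempty open `U, V`. -/
def IsMixing (Φ : DynAction G X) : Prop :=
  ∀ U V : Set X, IsOpen U → IsOpen V → U.Nonempty → V.Nonempty →
    ((hittingTimes Φ U V)ᶜ : Set G).Finite

/-- Minimality: there is no nonempty proper closed invariant subset. -/
def IsMinimal (Φ : DynAction G X) : Prop :=
  ∀ K : Set X, IsClosed K → (∀ g : G, ∀ x ∈ K, Φ.act g x ∈ K) →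
    K = ∅ ∨ K = Set.univ

end Mixing

/-! ### Inverse systems of subshifts -/

/-- An inverse system of dynamical systems whose terms are subshifts over finite
(discrete) alphabets, with the shift `G`-action. -/
structure SubshiftInvSys (G : Type u) [Group G] (Λ : Type u) [Preorder Λ] where
  A : Λ → Type u
  [topoA : ∀ l, TopologicalSpace (A l)]
  [discA : ∀ l, DiscreteTopology (A l)]
  [finA : ∀ l, Finite (A l)]
  Y : ∀ l : Λ, Set (G → A l)
  subshift : ∀ l : Λ, IsSubshift (Y l)
  bond : ∀ {l m : Λ}, l ≤ m → ↥(Y m) → ↥(Y l)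
  bond_cont : ∀ {l m : Λ} (h : l ≤ m), Continuous (bond h)
  bond_refl : ∀ (l : Λ) (x : ↥(Y l)), bond (le_refl l) x = x
  bond_comp : ∀ {l m n : Λ} (h1 : l ≤ m) (h2 : m ≤ n) (x : ↥(Y n)),
    bond h1 (bond h2 x) = bond (h1.trans h2) x
  bond_equivariant : ∀ {l m : Λ} (h : l ≤ m) (g : G) (x : ↥(Y m)),
    (subshiftDyn (Y l) (subshift l)).act g (bond h x)
      = bond h ((subshiftDyn (Y m) (subshift m)).act g x)

namespace SubshiftInvSys

variable {G Λ : Type u} [Group G] [Preorder Λ]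

instance (𝒮 : SubshiftInvSys G Λ) (l : Λ) : TopologicalSpace (𝒮.A l) := 𝒮.topoA l
instance (𝒮 : SubshiftInvSys G Λ) (l : Λ) : DiscreteTopology (𝒮.A l) := 𝒮.discA l
instance (𝒮 : SubshiftInvSys G Λ) (l : Λ) : Finite (𝒮.A l) := 𝒮.finA l

/-- The `G`-action on the term `Y l` (the restricted shift). -/
def termDyn (𝒮 : SubshiftInvSys G Λ) (l : Λ) : DynAction G ↥(𝒮.Y l) :=
  subshiftDyn (𝒮.Y l) (𝒮.subshift l)

/-- The inverse limit of the system, as a subset of the product. -/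
def limitSet (𝒮 : SubshiftInvSys G Λ) : Set (∀ l : Λ, ↥(𝒮.Y l)) :=
  {x | ∀ (l m : Λ) (h : l ≤ m), 𝒮.bond h (x m) = x l}

lemma act_mem_limitSet (𝒮 : SubshiftInvSys G Λ) (g : G) (x : ∀ l : Λ, ↥(𝒮.Y l))
    (hx : x ∈ 𝒮.limitSet) : (fun l => (𝒮.termDyn l).act g (x l)) ∈ 𝒮.limitSet := by
  intro l m h
  show 𝒮.bond h ((𝒮.termDyn m).act g (x m)) = (𝒮.termDyn l).act g (x l)
  rw [show (𝒮.termDyn m).act g (x m)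
        = (subshiftDyn (𝒮.Y m) (𝒮.subshift m)).act g (x m) from rfl,
      ← 𝒮.bond_equivariant h g (x m)]
  show (𝒮.termDyn l).act g (𝒮.bond h (x m)) = _
  rw [hx l m h]

/-- The induced `G`-action `σ*` on the inverse limit. -/
def limitDyn (𝒮 : SubshiftInvSys G Λ) : DynAction G ↥𝒮.limitSet where
  act g x := ⟨fun l => (𝒮.termDyn l).act g (x.1 l), 𝒮.act_mem_limitSet g x.1 x.2⟩
  continuous_act g := Continuous.subtype_mk
    (continuous_pi fun l => ((𝒮.termDyn l).continuous_act g).comp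
      ((continuous_apply l).comp continuous_subtype_val)) _
  act_one x := by
    apply Subtype.ext; funext l
    exact (𝒮.termDyn l).act_one (x.1 l)
  act_mul g g' x := by
    apply Subtype.ext; funext l
    exact (𝒮.termDyn l).act_mul g g' (x.1 l)

/-- The Mittag-Leffler condition. -/
def ML (𝒮 : SubshiftInvSys G Λ) : Prop :=
  ∀ l : Λ, ∃ m : Λ, ∃ h : l ≤ m, ∀ (n : Λ) (h' : m ≤ n),
    Set.range (𝒮.bond (h.trans h')) = Set.range (𝒮.bond h)

end SubshiftInvSys

/-- An inverse system of subshifts over some directed index set, packaged together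
with its (directed, preordered) index. -/
structure SubshiftInvSysPkg (G : Type u) [Group G] where
  Idx : Type u
  [pre : Preorder Idx]
  directed : IsDirected Idx (· ≤ ·)
  sys : SubshiftInvSys G Idx

namespace SubshiftInvSysPkg

variable {G : Type u} [Group G]

instance (P : SubshiftInvSysPkg G) : Preorder P.Idx := P.pre

end SubshiftInvSysPkg

/-!
Index the inverse system by the discrete quotients `Q` of `X`, and over `Q` take the shift of
finite type of all configurations `G → Q` whose `insert 1 S`-windows are windows of itineraries
`g ↦ Q.proj (Φ_g x)`. The itineraries give a continuous equivariant map into the inverse limit,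
injective because discrete quotients separate the points of a profinite space. Shadowing does the
rest: over a fine enough quotient `Q' ≤ Q`, every configuration is the itinerary of an
`(S, 𝒱)`-pseudo-orbit, and a point shadowing that pseudo-orbit has exactly the coarsened
configuration as its `Q`-itinerary. So the image of each bonding map from `Q'` consists of genuine
itineraries, which yields the Mittag-Leffler condition and, by compactness, surjectivity.
-/

section LocalShift

variable {G A : Type u}

lemma shift_shift [Group G] (g h : G) (c : G → A) :
    shift G A h (shift G A g c) = shift G A (h * g) c := by
  funext k
  simp only [shift, mul_assoc]

def localShift [Group G] (B : Finset G) (Z : Set (G → A)) : Set (G → A) :=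
  {c | ∀ g : G, shift G A g c ∈ language B Z}

lemma cylinder_eq_of_mem {B : Finset G} {P Q : G → A} (h : Q ∈ cylinder B P) :
    cylinder B Q = cylinder B P :=
  Set.ext fun y => forall₂_congr fun b hb => by rw [h b hb]

lemma isSFTOver_localShift [Group G] (B : Finset G) (Z : Set (G → A)) :
    IsSFTOver B (localShift B Z) := by
  refine ⟨(language B Z)ᶜ, Set.ext fun c => ⟨fun hc g P hP hgP => hP ?_, fun hc g => ?_⟩⟩
  · rw [language, mem_ofPred_eq, ← cylinder_eq_of_mem hgP]
    exact hc g
  · by_contra hg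
    exact hc g _ hg fun _ _ => rfl

lemma isClosed_language [TopologicalSpace A] [DiscreteTopology A] (B : Finset G)
    (Z : Set (G → A)) : IsClosed (language B Z) := by
  have hrestrict : language B Z = (fun c (b : B) => c b) ⁻¹' ((fun c (b : B) => c b) '' Z) := by
    ext P
    simp only [language, cylinder, Set.Nonempty, mem_inter_iff, mem_ofPred_eq, mem_preimage,
      mem_image, funext_iff, Subtype.forall]
    exact ⟨fun ⟨y, hyP, hyZ⟩ => ⟨y, hyZ, hyP⟩, fun ⟨y, hyZ, hyP⟩ => ⟨y, hyP, hyZ⟩⟩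
  rw [hrestrict]
  exact (isClosed_discrete _).preimage (by fun_prop)

lemma isSubshift_localShift [Group G] [TopologicalSpace A] [DiscreteTopology A] (B : Finset G)
    (Z : Set (G → A)) : IsSubshift (localShift B Z) := by
  refine ⟨?_, fun g c hc h => shift_shift g h c ▸ hc (h * g)⟩
  rw [show localShift B Z = ⋂ g, shift G A g ⁻¹' language B Z by ext; simp [localShift]]
  exact isClosed_iInter fun g =>
    (isClosed_language B Z).preimage ((shiftDyn G A).continuous_act g)

lemma subset_localShift [Group G] {B : Finset G} {Z : Set (G → A)}
    (hZ : ∀ g : G, ∀ z ∈ Z, shift G A g z ∈ Z) : Z ⊆ localShift B Z :=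
  fun z hz g => ⟨shift G A g z, fun _ _ => rfl, hZ g z hz⟩

lemma comp_mem_localShift [Group G] {A' : Type u} {B : Finset G} {Z : Set (G → A)}
    {Z' : Set (G → A')} (f : A → A') (hf : ∀ z ∈ Z, f ∘ z ∈ Z') {c : G → A}
    (hc : c ∈ localShift B Z) :
    f ∘ c ∈ localShift B Z' := fun g => by
  obtain ⟨y, hyc, hyZ⟩ := hc g
  exact ⟨f ∘ y, fun b hb => congrArg f (hyc b hb), hf y hyZ⟩

end LocalShift

namespace SubshiftInvSys

variable {G Λ X : Type u} [Group G] [Preorder Λ] (𝒮 : SubshiftInvSys G Λ)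

def IsCompatible (c : ∀ l, X → 𝒮.Y l) : Prop :=
  ∀ (l m : Λ) (h : l ≤ m) (x : X), 𝒮.bond h (c m x) = c l x

variable {𝒮} {c : ∀ l, X → 𝒮.Y l}

def toLimit (hc : 𝒮.IsCompatible c) (x : X) : 𝒮.limitSet :=
  ⟨fun l => c l x, fun l m h => hc l m h x⟩

lemma ml_of_range_bond_subset (hc : 𝒮.IsCompatible c)
    (hrange : ∀ l, ∃ m, ∃ h : l ≤ m, range (𝒮.bond h) ⊆ range (c l)) : 𝒮.ML := by
  intro l
  obtain ⟨m, hlm, hm⟩ := hrange l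
  refine ⟨m, hlm, fun n hmn => (range_subset_iff.2 fun y => ?_).antisymm ?_⟩
  · exact ⟨𝒮.bond hmn y, 𝒮.bond_comp hlm hmn y⟩
  · exact hm.trans (range_subset_iff.2 fun x => ⟨c n x, hc l n _ x⟩)

lemma toLimit_surjective [TopologicalSpace X] [CompactSpace X] [Nonempty Λ]
    [IsDirected Λ (· ≤ ·)]
    (hcont : ∀ l, Continuous (c l)) (hc : 𝒮.IsCompatible c)
    (hrange : ∀ l, ∃ m, ∃ h : l ≤ m, range (𝒮.bond h) ⊆ range (c l)) :
    Function.Surjective (toLimit hc) := by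
  intro y
  have hclosed : ∀ l, IsClosed (c l ⁻¹' {y.1 l}) :=
    fun l => isClosed_singleton.preimage (hcont l)
  have hanti : Antitone fun l => c l ⁻¹' {y.1 l} := fun l m h x (hx : c m x = y.1 m) =>
    show c l x = y.1 l by rw [← hc l m h x, hx, y.2 l m h]
  have hnonempty : ∀ l, (c l ⁻¹' {y.1 l}).Nonempty := fun l => by
    obtain ⟨m, h, hm⟩ := hrange l
    exact hm ⟨y.1 m, y.2 l m h⟩
  obtain ⟨x, hx⟩ := IsCompact.nonempty_iInter_of_directed_nonempty_isCompact_isClosed _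
    hanti.directed_ge hnonempty (fun l => (hclosed l).isCompact) hclosed
  exact ⟨x, Subtype.ext (funext fun l => mem_iInter.1 hx l)⟩

lemma isConjugacy_toLimit [TopologicalSpace X] [CompactSpace X] [Nonempty Λ]
    [IsDirected Λ (· ≤ ·)] (Φ : DynAction G X) (hcont : ∀ l, Continuous (c l))
    (hc : 𝒮.IsCompatible c)
    (hequiv : ∀ l g x, c l (Φ.act g x) = (𝒮.termDyn l).act g (c l x))
    (hsep : ∀ x y, (∀ l, c l x = c l y) → x = y)
    (hrange : ∀ l, ∃ m, ∃ h : l ≤ m, range (𝒮.bond h) ⊆ range (c l)) :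
    IsConjugacy Φ 𝒮.limitDyn (toLimit hc) :=
  ⟨(continuous_pi hcont).subtype_mk _,
    ⟨fun x y hxy => hsep x y fun l => congrFun (congrArg Subtype.val hxy) l,
      toLimit_surjective hcont hc hrange⟩,
    fun g x => Subtype.ext (funext fun l => hequiv l g x)⟩

end SubshiftInvSys

namespace DiscreteQuotient

variable {X : Type*} [TopologicalSpace X] [CompactSpace X]

lemma exists_le_forall_fiber_subset [T2Space X] [TotallyDisconnectedSpace X]
    (Q : DiscreteQuotient X) {𝒰 : Set (Set X)} (hopen : ∀ U ∈ 𝒰, IsOpen U)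
    (hcov : ⋃₀ 𝒰 = univ) : ∃ Q' ≤ Q, ∀ q : Q', ∃ U ∈ 𝒰, Q'.proj ⁻¹' {q} ⊆ U := by
  have hclopen : ∀ x : X, ∃ C, IsClopen C ∧ x ∈ C ∧ ∃ U ∈ 𝒰, C ⊆ U := fun x => by
    obtain ⟨U, hU, hxU⟩ := mem_sUnion.1 (hcov ▸ mem_univ x)
    obtain ⟨C, hC, hxC, hCU⟩ := compact_exists_isClopen_in_isOpen (hopen U hU) hxU
    exact ⟨C, hC, hxC, U, hU, hCU⟩
  choose C hC hxC hCU using hclopen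
  obtain ⟨t, ht⟩ := isCompact_univ.elim_finite_subcover C (fun x => (hC x).isOpen)
    fun x _ => mem_iUnion.2 ⟨x, hxC x⟩
  refine ⟨Q ⊓ t.inf fun x => ofIsClopen (hC x), inf_le_left, fun q => ?_⟩
  obtain ⟨y, rfl⟩ := proj_surjective _ q
  obtain ⟨x, hxt, hyx⟩ := mem_iUnion₂.1 (ht (mem_univ y))
  obtain ⟨U, hU, hCxU⟩ := hCU x
  have hle : Q ⊓ t.inf (fun x => ofIsClopen (hC x)) ≤ ofIsClopen (hC x) :=
    inf_le_right.trans (Finset.inf_le hxt)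
  refine ⟨U, hU, fun z hz => hCxU ?_⟩
  have hzy := fiber_subset_ofLE hle _ hz
  rw [ofLE_proj] at hzy
  exact (Quotient.exact' hzy).2 hyx

noncomputable def fiberCover (Q : DiscreteQuotient X) : Finset (Set X) :=
  (Set.finite_range fun q : Q => Q.proj ⁻¹' {q}).toFinset

lemma isFOC_fiberCover (Q : DiscreteQuotient X) : IsFOC Q.fiberCover := by
  refine ⟨fun U hU => ?_, eq_univ_of_forall fun x => ?_⟩
  · obtain ⟨q, rfl⟩ := (Set.Finite.mem_toFinset _).1 hU
    exact Q.isOpen_preimage _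
  · exact mem_sUnion.2 ⟨_, (Set.Finite.mem_toFinset _).2 ⟨Q.proj x, rfl⟩, rfl⟩

lemma proj_eq_of_mem_fiberCover {Q : DiscreteQuotient X} {U : Set X} (hU : U ∈ Q.fiberCover)
    {x y : X} (hx : x ∈ U) (hy : y ∈ U) : Q.proj x = Q.proj y := by
  obtain ⟨q, rfl⟩ := (Set.Finite.mem_toFinset _).1 hU
  exact hx.trans hy.symm

end DiscreteQuotient

section Itinerary

open DiscreteQuotient OrderDual

variable {G X : Type u} [Group G] [TopologicalSpace X] (Φ : DynAction G X) (S : Finset G)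

def itinerary (Q : DiscreteQuotient X) (x : X) : G → Q :=
  fun g => Q.proj (Φ.act g x)

lemma continuous_itinerary (Q : DiscreteQuotient X) : Continuous (itinerary Φ Q) :=
  continuous_pi fun g => Q.proj_continuous.comp (Φ.continuous_act g)

lemma itinerary_act (Q : DiscreteQuotient X) (g : G) (x : X) :
    itinerary Φ Q (Φ.act g x) = shift G Q g (itinerary Φ Q x) := by
  funext h
  simp only [itinerary, shift, Φ.act_mul]

lemma ofLE_comp_itinerary {Q Q' : DiscreteQuotient X} (h : Q' ≤ Q) (x : X) :
    ofLE h ∘ itinerary Φ Q' x = itinerary Φ Q x :=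
  funext fun _ => ofLE_proj h _

def itineraryShift (Q : DiscreteQuotient X) : Set (G → Q) :=
  localShift (insert 1 S) (range (itinerary Φ Q))

lemma itinerary_mem_itineraryShift (Q : DiscreteQuotient X) (x : X) :
    itinerary Φ Q x ∈ itineraryShift Φ S Q :=
  subset_localShift (by rintro g _ ⟨y, rfl⟩; exact ⟨_, itinerary_act Φ Q g y⟩) ⟨x, rfl⟩

lemma exists_pseudoOrbit_of_mem_itineraryShift {Q : DiscreteQuotient X} {𝒱 : Finset (Set X)}
    {V : Q → Set X} (hV : ∀ q, V q ∈ 𝒱) (hfiber : ∀ q, Q.proj ⁻¹' {q} ⊆ V q) {c : G → Q}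
    (hc : c ∈ itineraryShift Φ S Q) :
    ∃ x : G → X, IsPseudoOrbit Φ S 𝒱 x ∧ ∀ g, Q.proj (x g) = c g := by
  have hwindow : ∀ g, ∃ x : X, ∀ s ∈ insert 1 S, Q.proj (Φ.act s x) = c (s * g) := by
    intro g
    obtain ⟨_, hcyl, x, rfl⟩ := hc g
    exact ⟨x, hcyl⟩
  choose x hx using hwindow
  have hproj : ∀ g, Q.proj (x g) = c g := fun g => by
    simpa only [Φ.act_one, one_mul] using hx g 1 (Finset.mem_insert_self 1 S)
  exact ⟨x, ⟨fun g => V (c g), fun g => hV _, fun g s hs =>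
    ⟨hfiber _ (hproj (s * g)), hfiber _ (hx g s (Finset.mem_insert_of_mem hs))⟩⟩, hproj⟩

variable [CompactSpace X]

/-- Finer quotients are larger indices, so that bonding maps coarsen. -/
noncomputable def itinerarySys : SubshiftInvSys G (DiscreteQuotient X)ᵒᵈ where
  A Q := (ofDual Q : DiscreteQuotient X)
  Y Q := itineraryShift Φ S (ofDual Q)
  subshift _ := isSubshift_localShift _ _
  bond h c := ⟨ofLE h ∘ c.1, comp_mem_localShift _
    (by rintro _ ⟨x, rfl⟩; exact ⟨x, ofLE_comp_itinerary Φ h x⟩) c.2⟩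
  bond_cont h := ((continuous_pi fun g => (ofLE_continuous h).comp (continuous_apply g)).comp
    continuous_subtype_val).subtype_mk _
  bond_refl _ c := Subtype.ext (funext fun _ => ofLE_refl_apply _)
  bond_comp h₁ h₂ _ := Subtype.ext (funext fun _ => ofLE_ofLE h₂ h₁ _)
  bond_equivariant _ _ _ := rfl

noncomputable def itineraryCode (Q : (DiscreteQuotient X)ᵒᵈ) (x : X) :
    (itinerarySys Φ S).Y Q :=
  ⟨itinerary Φ (ofDual Q) x, itinerary_mem_itineraryShift Φ S _ x⟩

lemma itineraryCode_isCompatible : (itinerarySys Φ S).IsCompatible (itineraryCode Φ S) :=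
  fun _ _ h x => Subtype.ext (ofLE_comp_itinerary Φ h x)

lemma itineraryCode_act (Q : (DiscreteQuotient X)ᵒᵈ) (g : G) (x : X) :
    itineraryCode Φ S Q (Φ.act g x) =
      ((itinerarySys Φ S).termDyn Q).act g (itineraryCode Φ S Q x) :=
  Subtype.ext (itinerary_act Φ _ g x)

variable [T2Space X] [TotallyDisconnectedSpace X]

lemma eq_of_forall_itineraryCode_eq {x y : X}
    (h : ∀ Q, itineraryCode Φ S Q x = itineraryCode Φ S Q y) : x = y :=
  eq_of_forall_proj_eq fun Q => by
    have h1 : Q.proj (Φ.act 1 x) = Q.proj (Φ.act 1 y) :=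
      congrFun (congrArg Subtype.val (h (toDual Q))) 1
    rwa [Φ.act_one, Φ.act_one] at h1

lemma exists_le_forall_ofLE_comp_eq_itinerary (hsh : ShadowingProperty Φ (S : Set G))
    (Q : DiscreteQuotient X) :
    ∃ Q', ∃ h : Q' ≤ Q, ∀ c ∈ itineraryShift Φ S Q', ∃ z, ofLE h ∘ c = itinerary Φ Q z := by
  obtain ⟨𝒱, h𝒱, hshadow⟩ := hsh Q.fiberCover Q.isFOC_fiberCover
  obtain ⟨Q', hQ', hfiber⟩ := Q.exists_le_forall_fiber_subset h𝒱.1 h𝒱.2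
  choose V hV hVfiber using hfiber
  refine ⟨Q', hQ', fun c hc => ?_⟩
  obtain ⟨x, hx, hxc⟩ := exists_pseudoOrbit_of_mem_itineraryShift Φ S hV hVfiber hc
  obtain ⟨z, hz⟩ := hshadow x hx
  refine ⟨z, funext fun g => ?_⟩
  obtain ⟨U, hU, hzU, hxU⟩ := hz g
  calc ofLE hQ' (c g) = Q.proj (x g) := by rw [← hxc, ofLE_proj]
    _ = Q.proj (Φ.act g z) := proj_eq_of_mem_fiberCover hU hxU hzU

lemma exists_range_bond_subset_range_itineraryCode (hsh : ShadowingProperty Φ (S : Set G))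
    (Q : (DiscreteQuotient X)ᵒᵈ) :
    ∃ Q', ∃ h : Q ≤ Q', range ((itinerarySys Φ S).bond h) ⊆ range (itineraryCode Φ S Q) := by
  obtain ⟨Q', h, hQ'⟩ := exists_le_forall_ofLE_comp_eq_itinerary Φ S hsh (ofDual Q)
  refine ⟨toDual Q', h, ?_⟩
  rintro _ ⟨c, rfl⟩
  obtain ⟨z, hz⟩ := hQ' c.1 c.2
  exact ⟨z, Subtype.ext hz.symm⟩

end Itinerary

theorem shadowing_conjugate_invlim_SFT_general
    {G X : Type} [Group G] [TopologicalSpace X]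
    [CompactSpace X] [T2Space X] [TotallyDisconnectedSpace X]
    (Φ : DynAction G X) (S : Finset G)
    (hsh : ShadowingProperty Φ (S : Set G)) :
    ∃ P : SubshiftInvSysPkg G,
      P.sys.ML ∧
      (∀ l : P.Idx, IsSFTOver (insert (1 : G) S) (P.sys.Y l)) ∧
      ∃ f : X → ↥P.sys.limitSet, IsConjugacy Φ P.sys.limitDyn f := by
  have hrange := exists_range_bond_subset_range_itineraryCode Φ S hsh
  have hcompat := itineraryCode_isCompatible Φ S
  refine ⟨⟨(DiscreteQuotient X)ᵒᵈ, inferInstance, itinerarySys Φ S⟩,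
    SubshiftInvSys.ml_of_range_bond_subset hcompat hrange,
    fun _ => isSFTOver_localShift _ _, SubshiftInvSys.toLimit hcompat, ?_⟩
  exact SubshiftInvSys.isConjugacy_toLimit Φ (fun _ => (continuous_itinerary Φ _).subtype_mk _)
    hcompat (itineraryCode_act Φ S) (fun _ _ => eq_of_forall_itineraryCode_eq Φ S) hrange

/-- **Theorem 1.1 (first half).** If `X` is compact, totally disconnected and Hausdorff
and `Φ` has the `S`-shadowing property, then `(X,G,Φ)` is conjugate to the inverse limit
of an ML inverse system of shifts of finite type over `S ∪ {e_G}`. -/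
theorem shadowing_conjugate_invlim_SFT
    {G X : Type} [Group G] [Countable G] [TopologicalSpace X]
    [CompactSpace X] [T2Space X] [TotallyDisconnectedSpace X]
    (Φ : DynAction G X) (S : Finset G)
    (hsh : ShadowingProperty Φ (S : Set G)) :
    ∃ P : SubshiftInvSysPkg G,
      P.sys.ML ∧
      (∀ l : P.Idx, IsSFTOver (insert (1 : G) S) (P.sys.Y l)) ∧
      ∃ f : X → ↥P.sys.limitSet, IsConjugacy Φ P.sys.limitDyn f :=
  shadowing_conjugate_invlim_SFT_general Φ S hsh
end

section
/- Let S be a subset of a countable discrete group G. Suppose the dynamical system (X, G, Φ) is conjugate to the inverse limit of an inverse system (φ_λ^η, (X_λ, G, Φ^λ)) of dynamical systems satisfying the Mittag-Leffler condition. If Φ^λ has the S-shadowing property for each λ ∈ Λ, then Φ has the S-shadowing property. -/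
/-!
Every finite open cover `𝒰` of the inverse limit is refined by the pullback of a finite open
cover of a single level `X_l`: the open sets `(π_l '' Uᶜ)ᶜ`, `U ∈ 𝒰`, grow with `l` and
eventually cover the compact limit. Choose `m ≥ l` by the Mittag-Leffler condition. A
pseudo-orbit of the limit projects to a pseudo-orbit of `X_m`, shadowed there by some `y`.
Since `φ_l^m(X_m)` is the stable image, Cantor's intersection theorem lifts `φ_l^m(y)` to a point
`z` of the limit, and `z` shadows the original pseudo-orbit at level `l`, hence up to `𝒰`.
A conjugacy from a compact space onto the Hausdorff limit is a homeomorphism, and shadowing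
is invariant under equivariant homeomorphisms.
-/

open Set

universe u

/-! ### Abstract inverse systems of dynamical systems -/

/-- An inverse system of dynamical systems of the group `G` over the index `Λ`. -/
structure InvSysDS (G : Type u) [Group G] (Λ : Type u) [Preorder Λ] where
  X : Λ → Type u
  [topo : ∀ l, TopologicalSpace (X l)]
  [cpt : ∀ l, CompactSpace (X l)]
  [t2 : ∀ l, T2Space (X l)]
  dyn : ∀ l, DynAction G (X l)
  bond : ∀ {l m : Λ}, l ≤ m → X m → X l
  bond_cont : ∀ {l m : Λ} (h : l ≤ m), Continuous (bond h)
  bond_refl : ∀ (l : Λ) (x : X l), bond (le_refl l) x = x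
  bond_comp : ∀ {l m n : Λ} (h1 : l ≤ m) (h2 : m ≤ n) (x : X n),
    bond h1 (bond h2 x) = bond (h1.trans h2) x
  bond_equivariant : ∀ {l m : Λ} (h : l ≤ m) (g : G) (x : X m),
    (dyn l).act g (bond h x) = bond h ((dyn m).act g x)

namespace InvSysDS

variable {G Λ : Type u} [Group G] [Preorder Λ]

instance (𝒮 : InvSysDS G Λ) (l : Λ) : TopologicalSpace (𝒮.X l) := 𝒮.topo l
instance (𝒮 : InvSysDS G Λ) (l : Λ) : CompactSpace (𝒮.X l) := 𝒮.cpt l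
instance (𝒮 : InvSysDS G Λ) (l : Λ) : T2Space (𝒮.X l) := 𝒮.t2 l

/-- The inverse limit of the system, as a subset of the product. -/
def limitSet (𝒮 : InvSysDS G Λ) : Set (∀ l : Λ, 𝒮.X l) :=
  {x | ∀ (l m : Λ) (h : l ≤ m), 𝒮.bond h (x m) = x l}

lemma act_mem_limitSet (𝒮 : InvSysDS G Λ) (g : G) (x : ∀ l : Λ, 𝒮.X l)
    (hx : x ∈ 𝒮.limitSet) : (fun l => (𝒮.dyn l).act g (x l)) ∈ 𝒮.limitSet := by
  intro l m h
  rw [← 𝒮.bond_equivariant h g (x m), hx l m h]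

/-- The induced `G`-action `Φ*` on the inverse limit. -/
def limitDyn (𝒮 : InvSysDS G Λ) : DynAction G ↥𝒮.limitSet where
  act g x := ⟨fun l => (𝒮.dyn l).act g (x.1 l), 𝒮.act_mem_limitSet g x.1 x.2⟩
  continuous_act g := Continuous.subtype_mk
    (continuous_pi fun l => ((𝒮.dyn l).continuous_act g).comp
      ((continuous_apply l).comp continuous_subtype_val)) _
  act_one x := by
    apply Subtype.ext; funext l; exact (𝒮.dyn l).act_one (x.1 l)
  act_mul g g' x := by
    apply Subtype.ext; funext l; exact (𝒮.dyn l).act_mul g g' (x.1 l)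

/-- The Mittag-Leffler condition. -/
def ML (𝒮 : InvSysDS G Λ) : Prop :=
  ∀ l : Λ, ∃ m : Λ, ∃ h : l ≤ m, ∀ (n : Λ) (h' : m ≤ n),
    Set.range (𝒮.bond (h.trans h')) = Set.range (𝒮.bond h)

end InvSysDS

section Shadowing

variable {G X Y : Type u} [Group G] [TopologicalSpace X] [TopologicalSpace Y]

theorem IsFOC.exists_mem {𝒰 : Finset (Set X)} (h𝒰 : IsFOC 𝒰) (x : X) : ∃ U ∈ 𝒰, x ∈ U := by
  simpa using h𝒰.2.superset (mem_univ x)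

theorem IsFOC.preimage {π : X → Y} (hπ : Continuous π) {𝒰 : Finset (Set Y)} (h𝒰 : IsFOC 𝒰) :
    IsFOC (𝒰.image (π ⁻¹' ·)) := by
  refine ⟨Finset.forall_mem_image.2 fun U hU => (h𝒰.1 U hU).preimage hπ, ?_⟩
  refine eq_univ_of_forall fun x => ?_
  obtain ⟨U, hU, hxU⟩ := h𝒰.exists_mem (π x)
  exact ⟨π ⁻¹' U, Finset.mem_coe.2 (Finset.mem_image_of_mem _ hU), hxU⟩

theorem IsEquivariant.symm {ΦX : DynAction G X} {ΦY : DynAction G Y} (e : X ≃ Y)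
    (he : IsEquivariant ΦX ΦY e) : IsEquivariant ΦY ΦX e.symm := fun g y => by
  rw [e.symm_apply_eq, he, e.apply_symm_apply]

theorem IsPseudoOrbit.map {ΦX : DynAction G X} {ΦY : DynAction G Y} {π : X → Y}
    (hπ : IsEquivariant ΦX ΦY π) {S : Set G} {𝒱 : Finset (Set Y)} {x : G → X}
    (hx : IsPseudoOrbit ΦX S (𝒱.image (π ⁻¹' ·)) x) : IsPseudoOrbit ΦY S 𝒱 (π ∘ x) := by
  obtain ⟨U, hU𝒱, hU⟩ := hx
  choose V hV𝒱 hVU using fun g => Finset.mem_image.1 (hU𝒱 g)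
  refine ⟨V, hV𝒱, fun g s hs => ?_⟩
  rw [Function.comp_apply, Function.comp_apply, ← hπ]
  simpa [← hVU] using hU g s hs

theorem shadows_image_preimage_iff {ΦX : DynAction G X} {ΦY : DynAction G Y} {π : X → Y}
    (hπ : IsEquivariant ΦX ΦY π) {𝒰 : Finset (Set Y)} {z : X} {x : G → X} :
    Shadows ΦX (𝒰.image (π ⁻¹' ·)) z x ↔ Shadows ΦY 𝒰 (π z) (π ∘ x) := by
  simp [Shadows, ← hπ _ z]

theorem Shadows.of_refines {Φ : DynAction G X} {𝒰 𝒱 : Finset (Set X)} (h𝒱𝒰 : Refines 𝒱 𝒰)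
    {z : X} {x : G → X} (hz : Shadows Φ 𝒱 z x) : Shadows Φ 𝒰 z x := fun g => by
  obtain ⟨V, hV, hzV, hxV⟩ := hz g
  obtain ⟨U, hU, hVU⟩ := h𝒱𝒰 V hV
  exact ⟨U, hU, hVU hzV, hVU hxV⟩

theorem ShadowingProperty.of_subsingleton [Subsingleton X] (Φ : DynAction G X) (S : Set G) :
    ShadowingProperty Φ S := fun 𝒰 h𝒰 => ⟨𝒰, h𝒰, fun x _ => ⟨x 1, fun g => by
  obtain ⟨U, hU, hxU⟩ := h𝒰.exists_mem (x g)
  exact ⟨U, hU, Subsingleton.elim (x g) (Φ.act g (x 1)) ▸ hxU, hxU⟩⟩⟩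

theorem ShadowingProperty.of_isConjugacy [CompactSpace X] [T2Space Y] {ΦX : DynAction G X}
    {ΦY : DynAction G Y} {f : X → Y} (hf : IsConjugacy ΦX ΦY f) {S : Set G}
    (hY : ShadowingProperty ΦY S) : ShadowingProperty ΦX S := by
  let e : X ≃ₜ Y := hf.1.homeoOfEquivCompactToT2 (f := Equiv.ofBijective f hf.2.1)
  have he : IsEquivariant ΦY ΦX e.symm := IsEquivariant.symm e.toEquiv hf.2.2
  intro 𝒰 h𝒰
  obtain ⟨𝒱, h𝒱, hshadow⟩ := hY _ (h𝒰.preimage e.symm.continuous)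
  refine ⟨𝒱.image (f ⁻¹' ·), h𝒱.preimage hf.1, fun x hx => ?_⟩
  obtain ⟨z, hz⟩ := hshadow _ (hx.map hf.2.2)
  refine ⟨e.symm z, ?_⟩
  have hinv : ∀ x', e.symm (f x') = x' := e.symm_apply_apply
  simpa [Function.comp_def, hinv] using (shadows_image_preimage_iff he).1 hz

end Shadowing

namespace InvSysDS

variable {G Λ : Type u} [Group G] [Preorder Λ] (𝒮 : InvSysDS G Λ)

def proj (l : Λ) (x : 𝒮.limitSet) : 𝒮.X l := x.1 l

theorem continuous_proj (l : Λ) : Continuous (𝒮.proj l) :=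
  (continuous_apply l).comp continuous_subtype_val

theorem isEquivariant_proj (l : Λ) : IsEquivariant 𝒮.limitDyn (𝒮.dyn l) (𝒮.proj l) :=
  fun _ _ => rfl

theorem bond_proj {l m : Λ} (h : l ≤ m) (x : 𝒮.limitSet) : 𝒮.bond h (𝒮.proj m x) = 𝒮.proj l x :=
  x.2 l m h

theorem isEquivariant_bond {l m : Λ} (h : l ≤ m) : IsEquivariant (𝒮.dyn m) (𝒮.dyn l) (𝒮.bond h) :=
  fun g x => (𝒮.bond_equivariant h g x).symm

theorem isClosed_limitSet : IsClosed 𝒮.limitSet := by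
  simp only [limitSet, ofPred_forall]
  exact isClosed_iInter fun l => isClosed_iInter fun m => isClosed_iInter fun h =>
    isClosed_eq ((𝒮.bond_cont h).comp (continuous_apply m)) (continuous_apply l)

instance : CompactSpace 𝒮.limitSet :=
  isCompact_iff_compactSpace.1 𝒮.isClosed_limitSet.isCompact

variable [IsDirected Λ (· ≤ ·)]

theorem exists_proj_mem_kernImage [Nonempty Λ] {U : Set 𝒮.limitSet} (hU : IsOpen U) {x : 𝒮.limitSet}
    (hx : x ∈ U) : ∃ l, 𝒮.proj l x ∈ kernImage (𝒮.proj l) U := by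
  obtain ⟨U', hU', rfl⟩ := isOpen_induced_iff.1 hU
  obtain ⟨I, u, hu, hIU⟩ := isOpen_pi_iff.1 hU' x.1 hx
  obtain ⟨l, hl⟩ := I.exists_le
  refine ⟨l, fun x' hx' => hIU fun i hi => ?_⟩
  have hx'i : 𝒮.proj i x' = 𝒮.proj i x := by rw [← 𝒮.bond_proj (hl i hi), hx', 𝒮.bond_proj]
  change 𝒮.proj i x' ∈ u i
  exact hx'i ▸ (hu i hi).2

theorem exists_level_kernImage_cover [Nonempty Λ] {𝒰 : Finset (Set 𝒮.limitSet)} (h𝒰 : IsFOC 𝒰) :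
    ∃ l, ∀ x, ∃ U ∈ 𝒰, 𝒮.proj l x ∈ kernImage (𝒮.proj l) U := by
  let O : Λ → Set 𝒮.limitSet := fun l => ⋃ U ∈ 𝒰, 𝒮.proj l ⁻¹' kernImage (𝒮.proj l) U
  have hO_open : ∀ l, IsOpen (O l) := fun l => isOpen_biUnion fun U hU =>
    (isClosedMap_iff_kernImage.1 (𝒮.continuous_proj l).isClosedMap (h𝒰.1 U hU)).preimage
      (𝒮.continuous_proj l)
  have hO_mono : Monotone O := fun a b hab => iUnion₂_mono fun U _ x hx x' hx' =>
    hx (by rw [← 𝒮.bond_proj hab, hx', 𝒮.bond_proj])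
  have hO_cover : univ ⊆ ⋃ l, O l := fun x _ => by
    obtain ⟨U, hU, hxU⟩ := h𝒰.exists_mem x
    obtain ⟨l, hl⟩ := 𝒮.exists_proj_mem_kernImage (h𝒰.1 U hU) hxU
    exact mem_iUnion.2 ⟨l, mem_biUnion hU hl⟩
  obtain ⟨l, hl⟩ := isCompact_univ.elim_directed_cover O hO_open hO_cover hO_mono.directed_le
  exact ⟨l, fun x => by simpa [O] using hl (mem_univ x)⟩

theorem exists_isFOC_refines_preimage_proj [Nonempty Λ] [Nonempty 𝒮.limitSet]
    {𝒰 : Finset (Set 𝒮.limitSet)} (h𝒰 : IsFOC 𝒰) :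
    ∃ l, ∃ 𝒲 : Finset (Set (𝒮.X l)), IsFOC 𝒲 ∧ Refines (𝒲.image (𝒮.proj l ⁻¹' ·)) 𝒰 := by
  obtain ⟨l, hl⟩ := 𝒮.exists_level_kernImage_cover h𝒰
  refine ⟨l, 𝒰.image (kernImage (𝒮.proj l)), ⟨?_, eq_univ_of_forall fun y => ?_⟩, ?_⟩
  · exact Finset.forall_mem_image.2 fun U hU =>
      isClosedMap_iff_kernImage.1 (𝒮.continuous_proj l).isClosedMap (h𝒰.1 U hU)
  · by_cases hy : y ∈ range (𝒮.proj l)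
    · obtain ⟨x, rfl⟩ := hy
      obtain ⟨U, hU, hxU⟩ := hl x
      exact ⟨_, Finset.mem_coe.2 (Finset.mem_image_of_mem _ hU), hxU⟩
    · obtain ⟨U, hU, -⟩ := h𝒰.exists_mem (Classical.arbitrary 𝒮.limitSet)
      exact ⟨_, Finset.mem_coe.2 (Finset.mem_image_of_mem _ hU), fun x hx => (hy ⟨x, hx⟩).elim⟩
  · simp only [Refines, Finset.image_image, Finset.forall_mem_image]
    exact fun U hU => ⟨U, hU, subset_kernImage_iff.1 le_rfl⟩

theorem exists_proj_eq_bond_of_range_stable [∀ a, Nonempty (𝒮.X a)] {l m : Λ} (hlm : l ≤ m)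
    (hstab : ∀ (n : Λ) (hmn : m ≤ n), range (𝒮.bond (hlm.trans hmn)) = range (𝒮.bond hlm))
    (y : 𝒮.X m) : ∃ z : 𝒮.limitSet, 𝒮.proj l z = 𝒮.bond hlm y := by
  let K : Λ → Set (∀ a, 𝒮.X a) := fun n =>
    {w | w l = 𝒮.bond hlm y ∧ ∀ a b (hab : a ≤ b), b ≤ n → 𝒮.bond hab (w b) = w a}
  have hK_closed : ∀ n, IsClosed (K n) := fun n => by
    simp only [K, ofPred_and, ofPred_forall]
    refine (isClosed_eq (continuous_apply l) continuous_const).inter <|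
      isClosed_iInter fun a => isClosed_iInter fun b => isClosed_iInter fun hab =>
        isClosed_iInter fun _ => isClosed_eq ((𝒮.bond_cont hab).comp (continuous_apply b))
          (continuous_apply a)
  have hK_anti : Antitone K := fun n n' hnn' w hw =>
    ⟨hw.1, fun a b hab hbn => hw.2 a b hab (hbn.trans hnn')⟩
  have hK_nonempty : ∀ n, (K n).Nonempty := fun n => by
    classical
    obtain ⟨n', hnn', hmn'⟩ := exists_ge_ge n m
    obtain ⟨x, hx⟩ : 𝒮.bond hlm y ∈ range (𝒮.bond (hlm.trans hmn')) :=
      hstab n' hmn' ▸ mem_range_self y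
    refine ⟨fun a => if ha : a ≤ n' then 𝒮.bond ha x else Classical.arbitrary _, ?_, ?_⟩
    · simp [hlm.trans hmn', hx]
    · intro a b hab hbn
      simp [hbn.trans hnn', hab.trans (hbn.trans hnn'), 𝒮.bond_comp]
  have : Nonempty Λ := ⟨l⟩
  obtain ⟨w, hw⟩ := IsCompact.nonempty_iInter_of_directed_nonempty_isCompact_isClosed K
    hK_anti.directed_ge hK_nonempty (fun n => (hK_closed n).isCompact) hK_closed
  rw [mem_iInter] at hw
  exact ⟨⟨w, fun a b hab => (hw b).2 a b hab le_rfl⟩, (hw l).1⟩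

theorem shadowingProperty_limitDyn (hML : 𝒮.ML) {S : Set G}
    (hterms : ∀ l, ShadowingProperty (𝒮.dyn l) S) : ShadowingProperty 𝒮.limitDyn S := by
  rcases subsingleton_or_nontrivial 𝒮.limitSet with _ | ⟨x₀, x₁, hx⟩
  · exact .of_subsingleton _ S
  have : Nonempty Λ := by
    by_contra hΛ
    exact hx (Subtype.ext (funext fun l => (hΛ ⟨l⟩).elim))
  have : Nonempty 𝒮.limitSet := ⟨x₀⟩
  have : ∀ a, Nonempty (𝒮.X a) := fun a => ⟨𝒮.proj a x₀⟩
  intro 𝒰 h𝒰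
  obtain ⟨l, 𝒲, h𝒲, h𝒲𝒰⟩ := 𝒮.exists_isFOC_refines_preimage_proj h𝒰
  obtain ⟨m, hlm, hstab⟩ := hML l
  obtain ⟨𝒱, h𝒱, hshadow⟩ := hterms m _ (h𝒲.preimage (𝒮.bond_cont hlm))
  refine ⟨𝒱.image (𝒮.proj m ⁻¹' ·), h𝒱.preimage (𝒮.continuous_proj m), fun x hx => ?_⟩
  obtain ⟨y, hy⟩ := hshadow _ (hx.map (𝒮.isEquivariant_proj m))
  obtain ⟨z, hz⟩ := 𝒮.exists_proj_eq_bond_of_range_stable hlm hstab y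
  refine ⟨z, Shadows.of_refines h𝒲𝒰 ((shadows_image_preimage_iff (𝒮.isEquivariant_proj l)).2 ?_)⟩
  have hy_l := (shadows_image_preimage_iff (𝒮.isEquivariant_bond hlm)).1 hy
  simpa [hz, Function.comp_def, 𝒮.bond_proj] using hy_l

end InvSysDS

theorem shadowing_of_conjugate_ML_invlim_general
    {G X : Type} [Group G] [TopologicalSpace X]
    [CompactSpace X]
    (Φ : DynAction G X) (S : Set G)
    {Λ : Type} [Preorder Λ] [IsDirected Λ (· ≤ ·)]
    (𝒮 : InvSysDS G Λ) (hML : 𝒮.ML)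
    (hterms : ∀ l : Λ, ShadowingProperty (𝒮.dyn l) S)
    (f : X → ↥𝒮.limitSet) (hf : IsConjugacy Φ 𝒮.limitDyn f) :
    ShadowingProperty Φ S :=
  (𝒮.shadowingProperty_limitDyn hML hterms).of_isConjugacy hf

/-- **Theorem 3.4.** Shadowing passes to inverse limits of ML inverse systems: if
`(X,G,Φ)` is conjugate to the inverse limit of an ML inverse system all of whose terms
have the `S`-shadowing property, then `Φ` has the `S`-shadowing property. -/
theorem shadowing_of_conjugate_ML_invlim
    {G X : Type} [Group G] [Countable G] [TopologicalSpace X]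
    [CompactSpace X] [T2Space X]
    (Φ : DynAction G X) (S : Set G)
    {Λ : Type} [Preorder Λ] [IsDirected Λ (· ≤ ·)]
    (𝒮 : InvSysDS G Λ) (hML : 𝒮.ML)
    (hterms : ∀ l : Λ, ShadowingProperty (𝒮.dyn l) S)
    (f : X → ↥𝒮.limitSet) (hf : IsConjugacy Φ 𝒮.limitDyn f) :
    ShadowingProperty Φ S :=
  shadowing_of_conjugate_ML_invlim_general Φ S 𝒮 hML hterms f hf
end

section
/- Let (X, G, Φ) be a dynamical system where X is a compact metric space, and let S be a finite subset of G. If Φ has the metric S-shadowing property, then there exists an inverse system (φ_n^{n+1}, (X_n, G, σ)) indexed by the natural numbers, whose terms X_n are shifts of finite type over S ∪ {e_G} with the shift G-action, such that (X, G, Φ) is a factor of the inverse limit (lim⟵{φ_n^{n+1}, X_n}, G, σ*). -/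
open Set
open scoped Classical

universe u

/-! ### Metric shadowing -/

/-- `{x g}` is an `(S,δ)`-pseudo-orbit for the metric `d`. -/
def IsMetricPseudoOrbit {G X : Type u} [Group G] [MetricSpace X]
    (Φ : DynAction G X) (S : Set G) (δ : ℝ) (x : G → X) : Prop :=
  ∀ g : G, ∀ s ∈ S, dist (Φ.act s (x g)) (x (s * g)) < δ

/-- The metric `S`-shadowing property. -/
def MetricShadowing {G X : Type u} [Group G] [MetricSpace X]
    (Φ : DynAction G X) (S : Set G) : Prop :=
  ∀ ε : ℝ, 0 < ε → ∃ δ : ℝ, 0 < δ ∧ ∀ x : G → X,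
    IsMetricPseudoOrbit Φ S δ x → ∃ z : X, ∀ g : G, dist (Φ.act g z) (x g) < ε

/-! Fix precisions `ε n → 0`, shadowing constants `δ n` and nested finite quantizers `q n` of `X`
(`q l ∘ q m = q l` for `l ≤ m`) with cells of size `ρ n`. The `n`-th shift of finite type consists
of the `δ n`-pseudo-orbits with values in the finite set `q n (X)`, a condition on the coordinates
`g` and `s * g` only, and applying `q l` coordinatewise bonds level `m` to level `l`. A point of the
inverse limit is a coherent sequence of ever finer pseudo-orbits `x n`; the points `x n 1` converge
to some `z`, and shadowing shows `x n g → Φ g z`, which makes `x ↦ z` equivariant. It is onto,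
since quantizing the orbit of `z` gives a point of the limit over `z`, and continuous as the
uniform limit of the maps `x ↦ x n 1`. -/

open Filter Topology

section NestedQuantizer

variable {X : Type*} [PseudoMetricSpace X] [CompactSpace X]

lemma exists_finite_range_dist_lt {r : ℝ} (hr : 0 < r) :
    ∃ c : X → X, (range c).Finite ∧ ∀ x, dist (c x) x < r := by
  obtain ⟨t, -, ht, hcover⟩ := finite_cover_balls_of_compact (isCompact_univ (X := X)) hr
  have hnear : ∀ x : X, ∃ y ∈ t, dist y x < r := fun x => by
    simpa [dist_comm] using hcover (mem_univ x)
  choose c hct hc using hnear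
  exact ⟨c, ht.subset (range_subset_iff.2 hct), hc⟩

/-- `q n x` is a chosen point of the cell `{y | ∀ k ≤ n, c k y = c k x}`, where `c k` is a finite
`ρ k / 2`-net; the cells refine as `n` grows, whence `q l ∘ q m = q l`. -/
lemma exists_nested_quantizer {ρ : ℕ → ℝ} (hρ : ∀ n, 0 < ρ n) :
    ∃ q : ℕ → X → X, (∀ n, (range (q n)).Finite) ∧ (∀ n x, dist (q n x) x < ρ n) ∧
      ∀ l m, l ≤ m → ∀ x, q l (q m x) = q l x := by
  choose c hc_fin hc_dist using fun n => exists_finite_range_dist_lt (X := X) (half_pos (hρ n))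
  let F : (n : ℕ) → X → Fin (n + 1) → X := fun n x k => c k x
  have hF : ∀ n x, F n (rangeSplitting (F n) (rangeFactorization (F n) x)) = F n x :=
    fun n x => apply_rangeSplitting (F n) _
  refine ⟨fun n => rangeSplitting (F n) ∘ rangeFactorization (F n), fun n => ?_,
    fun n x => ?_, fun l m hlm x => ?_⟩
  · have : (range (F n)).Finite := (Set.Finite.pi fun k : Fin (n + 1) => hc_fin k).subset
      (range_subset_iff.2 fun x k _ => mem_range_self x)
    have := this.to_subtype
    exact (finite_range _).subset (range_comp_subset_range _ _)
  · set y := rangeSplitting (F n) (rangeFactorization (F n) x)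
    have hcy : c n y = c n x := congrFun (hF n x) (Fin.last n)
    calc dist y x ≤ dist y (c n y) + dist (c n x) x := hcy ▸ dist_triangle _ _ _
      _ < ρ n / 2 + ρ n / 2 := add_lt_add (by rw [dist_comm]; exact hc_dist n y) (hc_dist n x)
      _ = ρ n := add_halves _
  · refine congrArg (rangeSplitting (F l)) (Subtype.ext (funext fun k => ?_))
    exact congrFun (hF m x) (Fin.castLE (by omega) k)

end NestedQuantizer

section LocalRule

variable {G A : Type u} [Group G]

def localRuleShift (S : Finset G) (R : G → A → A → Prop) : Set (G → A) :=
  {x | ∀ g, ∀ s ∈ S, R s (x g) (x (s * g))}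

lemma isSFTOver_localRuleShift (S : Finset G) (R : G → A → A → Prop) :
    IsSFTOver (insert 1 S) (localRuleShift S R) := by
  refine ⟨{P | ∃ s ∈ S, ¬ R s (P 1) (P s)}, Set.ext fun x => ⟨?_, ?_⟩⟩
  · rintro hx g P ⟨s, hs, hP⟩ hxP
    have h1 : x g = P 1 := by simpa [shift] using hxP 1 (Finset.mem_insert_self _ _)
    have hs' : x (s * g) = P s := hxP s (Finset.mem_insert_of_mem hs)
    exact hP (h1 ▸ hs' ▸ hx g s hs)
  · intro hx g s hs
    by_contra hR
    exact hx g (shift G A g x) ⟨s, hs, by simpa [shift] using hR⟩ fun _ _ => rfl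

lemma isSubshift_localRuleShift [TopologicalSpace A] [DiscreteTopology A] (S : Finset G)
    (R : G → A → A → Prop) : IsSubshift (localRuleShift S R) := by
  refine ⟨?_, fun g x hx h s hs => by simpa [shift, mul_assoc] using hx (h * g) s hs⟩
  have : localRuleShift S R =
      ⋂ g, ⋂ s ∈ S, (fun x : G → A => (x g, x (s * g))) ⁻¹' {p | R s p.1 p.2} := by
    ext; simp [localRuleShift]
  rw [this]
  exact isClosed_iInter fun g => isClosed_biInter fun s _ =>
    (isClosed_discrete _).preimage ((continuous_apply g).prodMk (continuous_apply (s * g)))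

end LocalRule

lemma exists_pos_seq_le_forall_lt_le_div (a : ℕ → ℝ) (ha : ∀ n, 0 < a n) {c : ℝ} (hc : 1 ≤ c) :
    ∃ δ : ℕ → ℝ, (∀ n, 0 < δ n) ∧ (∀ n, δ n ≤ a n) ∧ ∀ l m, l < m → δ m ≤ δ l / c := by
  let δ : ℕ → ℝ := fun n => Nat.rec (a 0) (fun k d => min (a (k + 1)) (d / c)) n
  have hpos : ∀ n, 0 < δ n := fun n => by
    induction n with
    | zero => exact ha 0
    | succ n ih => exact lt_min (ha _) (div_pos ih (by linarith))
  have hsucc : ∀ n, δ (n + 1) ≤ δ n / c := fun n => min_le_right _ _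
  have hanti : Antitone δ := antitone_nat_of_succ_le fun n =>
    (hsucc n).trans (div_le_self (hpos n).le hc)
  refine ⟨δ, hpos, fun n => ?_, fun l m hlm => (hanti hlm).trans (hsucc l)⟩
  cases n with
  | zero => exact le_rfl
  | succ n => exact min_le_left _ _

/-- The factors `1 / 3` leave room for the three-term triangle inequality of
`quantize_mem_level`. -/
structure ShadowingScheme {G X : Type} [Group G] [MetricSpace X] (Φ : DynAction G X)
    (S : Finset G) where
  ε : ℕ → ℝ
  δ : ℕ → ℝ
  ρ : ℕ → ℝ
  q : ℕ → X → X
  tendsto_ε : Tendsto ε atTop (𝓝 0)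
  tendsto_ρ : Tendsto ρ atTop (𝓝 0)
  shadow : ∀ n (x : G → X), IsMetricPseudoOrbit Φ (S : Set G) (δ n) x →
    ∃ z, ∀ g, dist (Φ.act g z) (x g) < ε n
  δ_pos : ∀ n, 0 < δ n
  δ_le_of_lt : ∀ {l m}, l < m → δ m ≤ δ l / 3
  ρ_le : ∀ n, ρ n ≤ δ n / 3
  dist_act_lt : ∀ n, ∀ s ∈ S, ∀ a b, dist a b < ρ n → dist (Φ.act s a) (Φ.act s b) < δ n / 3
  finite_range_q : ∀ n, (range (q n)).Finite
  dist_q_lt : ∀ n x, dist (q n x) x < ρ n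
  q_q_of_le : ∀ {l m}, l ≤ m → ∀ x, q l (q m x) = q l x

namespace ShadowingScheme

variable {G X : Type} [Group G] [MetricSpace X] {Φ : DynAction G X} {S : Finset G}

theorem nonempty [CompactSpace X] (hsh : MetricShadowing Φ (S : Set G)) :
    Nonempty (ShadowingScheme Φ S) := by
  let ε : ℕ → ℝ := fun n => 1 / ((n : ℝ) + 1)
  have hε : ∀ n, 0 < ε n := fun n => Nat.one_div_pos_of_nat
  choose δ₀ hδ₀ hshadow using fun n => hsh (ε n) (hε n)
  obtain ⟨δ, hδ, hδ_le, hδ_lt⟩ := exists_pos_seq_le_forall_lt_le_div (fun n => min (δ₀ n) (ε n))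
    (fun n => lt_min (hδ₀ n) (hε n)) (c := 3) (by norm_num)
  have hequi : UniformEquicontinuous fun s : S => Φ.act s := uniformEquicontinuous_finite.2
    fun s => CompactSpace.uniformContinuous_of_continuous (Φ.continuous_act s)
  choose r hr hmod using fun n =>
    Metric.uniformEquicontinuous_iff.1 hequi (δ n / 3) (div_pos (hδ n) three_pos)
  let ρ : ℕ → ℝ := fun n => min (r n) (δ n / 3)
  have hρ_le : ∀ n, ρ n ≤ δ n / 3 := fun n => min_le_right _ _
  obtain ⟨q, hq_fin, hq_dist, hq_q⟩ :=
    exists_nested_quantizer (X := X) (ρ := ρ) fun n => lt_min (hr n) (div_pos (hδ n) three_pos)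
  refine ⟨{ ε, δ, ρ, q,
            tendsto_ε := tendsto_one_div_add_atTop_nhds_zero_nat
            tendsto_ρ := ?_
            shadow := fun n x hx => hshadow n x fun g s hs =>
              (hx g s hs).trans_le ((hδ_le n).trans (min_le_left _ _))
            δ_pos := hδ
            δ_le_of_lt := hδ_lt _ _
            ρ_le := hρ_le
            dist_act_lt := fun n s hs a b hab =>
              hmod n a b (hab.trans_le (min_le_left _ _)) ⟨s, hs⟩
            finite_range_q := hq_fin
            dist_q_lt := hq_dist
            q_q_of_le := hq_q _ _ }⟩
  refine squeeze_zero (fun n => ?_) (fun n => ?_) tendsto_one_div_add_atTop_nhds_zero_nat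
  · exact le_min (hr n).le (div_pos (hδ n) three_pos).le
  · linarith [hρ_le n, hδ n, (hδ_le n).trans (min_le_right _ _)]

variable (𝔰 : ShadowingScheme Φ S)

instance (n : ℕ) : Finite (range (𝔰.q n)) := (𝔰.finite_range_q n).to_subtype

def level (n : ℕ) : Set (G → range (𝔰.q n)) :=
  localRuleShift S fun s a b => dist (Φ.act s a) b < 𝔰.δ n

def quantize (n : ℕ) (x : G → X) : G → range (𝔰.q n) :=
  rangeFactorization (𝔰.q n) ∘ x

lemma quantize_val (n : ℕ) (x : G → range (𝔰.q n)) : 𝔰.quantize n (Subtype.val ∘ x) = x := by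
  funext g
  obtain ⟨y, hy⟩ := (x g).2
  apply Subtype.ext
  change 𝔰.q n (x g) = x g
  rw [← hy, 𝔰.q_q_of_le le_rfl]

lemma quantize_quantize {l m : ℕ} (hlm : l ≤ m) (x : G → X) :
    𝔰.quantize l (Subtype.val ∘ 𝔰.quantize m x) = 𝔰.quantize l x :=
  funext fun g => Subtype.ext (𝔰.q_q_of_le hlm (x g))

lemma quantize_mem_level {n : ℕ} {x : G → X}
    (hx : ∀ g, ∀ s ∈ S, dist (Φ.act s (x g)) (x (s * g)) ≤ 𝔰.δ n / 3) :
    𝔰.quantize n x ∈ 𝔰.level n := by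
  intro g s hs
  have hq : dist (x (s * g)) (𝔰.q n (x (s * g))) < 𝔰.δ n / 3 :=
    dist_comm (x (s * g)) _ ▸ (𝔰.dist_q_lt n _).trans_le (𝔰.ρ_le n)
  have hΦq : dist (Φ.act s (𝔰.q n (x g))) (Φ.act s (x g)) < 𝔰.δ n / 3 :=
    𝔰.dist_act_lt n s hs _ _ (𝔰.dist_q_lt n _)
  calc dist (Φ.act s (𝔰.q n (x g))) (𝔰.q n (x (s * g)))
      ≤ dist (Φ.act s (𝔰.q n (x g))) (Φ.act s (x g)) + dist (Φ.act s (x g)) (x (s * g))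
        + dist (x (s * g)) (𝔰.q n (x (s * g))) := dist_triangle4 _ _ _ _
    _ < 𝔰.δ n := by linarith [hx g s hs]

lemma quantize_val_mem_level {l m : ℕ} (hlm : l ≤ m) {x : G → range (𝔰.q m)}
    (hx : x ∈ 𝔰.level m) : 𝔰.quantize l (Subtype.val ∘ x) ∈ 𝔰.level l := by
  rcases hlm.eq_or_lt with rfl | hlt
  · rwa [quantize_val]
  · exact 𝔰.quantize_mem_level fun g s hs => (hx g s hs).le.trans (𝔰.δ_le_of_lt hlt)

lemma continuous_quantize_val (l m : ℕ) :
    Continuous fun x : G → range (𝔰.q m) => 𝔰.quantize l (Subtype.val ∘ x) :=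
  continuous_pi fun g => (continuous_of_discreteTopology
    (f := fun a : range (𝔰.q m) => rangeFactorization (𝔰.q l) (a : X))).comp (continuous_apply g)

lemma isSFTOver_level (n : ℕ) : IsSFTOver (insert 1 S) (𝔰.level n) :=
  isSFTOver_localRuleShift S _

abbrev system : SubshiftInvSys G ℕ where
  A n := range (𝔰.q n)
  Y := 𝔰.level
  subshift _ := isSubshift_localRuleShift S _
  bond {l _} hlm x := ⟨𝔰.quantize l (Subtype.val ∘ x.1), 𝔰.quantize_val_mem_level hlm x.2⟩
  bond_cont {l m} _ := ((𝔰.continuous_quantize_val l m).comp continuous_subtype_val).subtype_mk _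
  bond_refl l x := Subtype.ext (𝔰.quantize_val l x.1)
  bond_comp h₁ _ _ := Subtype.ext (𝔰.quantize_quantize h₁ _)
  bond_equivariant _ _ _ := rfl

def coord (x : 𝔰.system.limitSet) (n : ℕ) (g : G) : X := (x.1 n).1 g

variable {𝔰}

lemma coord_eq_q (x : 𝔰.system.limitSet) {l m : ℕ} (hlm : l ≤ m) (g : G) :
    𝔰.coord x l g = 𝔰.q l (𝔰.coord x m g) :=
  (congrArg (fun y : 𝔰.level l => (y.1 g : X)) (x.2 l m hlm)).symm

lemma dist_coord_lt (x : 𝔰.system.limitSet) {l m : ℕ} (hlm : l ≤ m) (g : G) :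
    dist (𝔰.coord x l g) (𝔰.coord x m g) < 𝔰.ρ l := by
  rw [coord_eq_q x hlm g]
  exact 𝔰.dist_q_lt l _

lemma cauchySeq_coord (x : 𝔰.system.limitSet) (g : G) : CauchySeq fun n => 𝔰.coord x n g := by
  refine Metric.cauchySeq_iff'.2 fun ε hε => ?_
  obtain ⟨N, hN⟩ := eventually_atTop.1 (𝔰.tendsto_ρ.eventually (gt_mem_nhds hε))
  exact ⟨N, fun n hn => (dist_comm (𝔰.coord x n g) _ ▸ dist_coord_lt x hn g).trans (hN N le_rfl)⟩

lemma coord_act (x : 𝔰.system.limitSet) (g : G) (n : ℕ) :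
    𝔰.coord (𝔰.system.limitDyn.act g x) n 1 = 𝔰.coord x n g := by
  simp [coord, SubshiftInvSys.limitDyn, SubshiftInvSys.termDyn, subshiftDyn, shift]

variable [CompactSpace X]

variable (𝔰) in
noncomputable def factor (x : 𝔰.system.limitSet) : X :=
  (cauchySeq_tendsto_of_complete (cauchySeq_coord x 1)).choose

lemma tendsto_coord_one (x : 𝔰.system.limitSet) :
    Tendsto (fun n => 𝔰.coord x n 1) atTop (𝓝 (𝔰.factor x)) :=
  (cauchySeq_tendsto_of_complete (cauchySeq_coord x 1)).choose_spec

lemma dist_coord_factor_le (x : 𝔰.system.limitSet) (n : ℕ) :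
    dist (𝔰.coord x n 1) (𝔰.factor x) ≤ 𝔰.ρ n :=
  le_of_tendsto (tendsto_const_nhds.dist (tendsto_coord_one x))
    (eventually_atTop.2 ⟨n, fun _ hm => (dist_coord_lt x hm 1).le⟩)

/-- Shadowing the pseudo-orbits `coord x n` by points `z n` gives `z n → factor x`, hence
`coord x n g ≈ Φ g (z n) → Φ g (factor x)`. -/
lemma tendsto_coord (x : 𝔰.system.limitSet) (g : G) :
    Tendsto (fun n => 𝔰.coord x n g) atTop (𝓝 (Φ.act g (𝔰.factor x))) := by
  have hpo : ∀ n, IsMetricPseudoOrbit Φ (S : Set G) (𝔰.δ n) (𝔰.coord x n) :=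
    fun n => (x.1 n).2
  choose z hz using fun n => 𝔰.shadow n _ (hpo n)
  have hz_lim : Tendsto z atTop (𝓝 (𝔰.factor x)) := by
    refine tendsto_iff_dist_tendsto_zero.2 (squeeze_zero (fun _ => dist_nonneg) (fun n => ?_)
      (by simpa using 𝔰.tendsto_ε.add 𝔰.tendsto_ρ))
    calc dist (z n) (𝔰.factor x)
        ≤ dist (z n) (𝔰.coord x n 1) + dist (𝔰.coord x n 1) (𝔰.factor x) := dist_triangle _ _ _
      _ ≤ 𝔰.ε n + 𝔰.ρ n :=
          add_le_add (by simpa [Φ.act_one] using (hz n 1).le) (dist_coord_factor_le x n)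
  refine (((Φ.continuous_act g).tendsto _).comp hz_lim).congr_dist
    (squeeze_zero (fun _ => dist_nonneg) (fun n => (hz n g).le) 𝔰.tendsto_ε)

lemma factor_act (g : G) (x : 𝔰.system.limitSet) :
    𝔰.factor (𝔰.system.limitDyn.act g x) = Φ.act g (𝔰.factor x) :=
  tendsto_nhds_unique (tendsto_coord_one _) (by simpa only [coord_act] using tendsto_coord x g)

lemma continuous_factor : Continuous 𝔰.factor := by
  refine TendstoUniformly.continuous (F := fun n x => 𝔰.coord x n 1) (p := atTop) ?_
    (Frequently.of_forall fun n => ?_)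
  · refine Metric.tendstoUniformly_iff.2 fun ε hε => ?_
    filter_upwards [𝔰.tendsto_ρ.eventually (gt_mem_nhds hε)] with n hn x
    exact (dist_comm (𝔰.factor x) _ ▸ dist_coord_factor_le x n).trans_lt hn
  · exact continuous_subtype_val.comp (((continuous_apply 1).comp continuous_subtype_val).comp
      ((continuous_apply n).comp continuous_subtype_val))

variable (𝔰) in
noncomputable def orbitPoint (z : X) : 𝔰.system.limitSet :=
  ⟨fun n => ⟨𝔰.quantize n fun g => Φ.act g z, 𝔰.quantize_mem_level fun g s _ => by
      rw [Φ.act_mul, dist_self]; exact (div_pos (𝔰.δ_pos n) three_pos).le⟩,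
    fun _ _ hlm => Subtype.ext (𝔰.quantize_quantize hlm _)⟩

lemma factor_orbitPoint (z : X) : 𝔰.factor (𝔰.orbitPoint z) = z := by
  refine tendsto_nhds_unique (tendsto_coord_one _) ?_
  refine tendsto_iff_dist_tendsto_zero.2 (squeeze_zero (fun _ => dist_nonneg) (fun n => ?_)
    𝔰.tendsto_ρ)
  simpa [coord, orbitPoint, quantize, Φ.act_one] using (𝔰.dist_q_lt n z).le

lemma isFactorMap_factor : IsFactorMap 𝔰.system.limitDyn Φ 𝔰.factor :=
  ⟨continuous_factor, fun z => ⟨_, factor_orbitPoint z⟩, factor_act⟩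

end ShadowingScheme

theorem metric_shadowing_factor_of_invlim_SFT_general
    {G X : Type} [Group G] [MetricSpace X] [CompactSpace X]
    (Φ : DynAction G X) (S : Finset G)
    (hsh : MetricShadowing Φ (S : Set G)) :
    ∃ 𝒮 : SubshiftInvSys G ℕ,
      (∀ n : ℕ, IsSFTOver (insert (1 : G) S) (𝒮.Y n)) ∧
      ∃ f : ↥𝒮.limitSet → X, IsFactorMap 𝒮.limitDyn Φ f := by
  obtain ⟨𝔰⟩ := ShadowingScheme.nonempty hsh
  exact ⟨𝔰.system, 𝔰.isSFTOver_level, 𝔰.factor, ShadowingScheme.isFactorMap_factor⟩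

/-- **Theorem 1.3.** If `X` is a compact metric space and `Φ` has the (metric)
`S`-shadowing property, then there is an inverse system, indexed by `ℕ`, of shifts of
finite type over `S ∪ {e_G}`, such that `(X,G,Φ)` is a factor of its inverse limit. -/
theorem metric_shadowing_factor_of_invlim_SFT
    {G X : Type} [Group G] [Countable G] [MetricSpace X] [CompactSpace X]
    (Φ : DynAction G X) (S : Finset G)
    (hsh : MetricShadowing Φ (S : Set G)) :
    ∃ 𝒮 : SubshiftInvSys G ℕ,
      (∀ n : ℕ, IsSFTOver (insert (1 : G) S) (𝒮.Y n)) ∧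
      ∃ f : ↥𝒮.limitSet → X, IsFactorMap 𝒮.limitDyn Φ f :=
  metric_shadowing_factor_of_invlim_SFT_general Φ S hsh
end
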